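/- arXiv:nlin/0610045 — 4 statements merged into one kernel-verified Lean document; each statement's English description precedes it below -/
import Mathlib

section
/- Let f : ℝ³ → Mₙ(ℝ) be infinitely differentiable with f(x,y,t) invertible for every (x,y,t), and suppose f satisfies ∂_y f = ∂_x² f and ∂_t f = ∂_x³ f. Then φ := (∂_x f)·f⁻¹ satisfies the second noncommutative Burgers hierarchy equation ∂_t φ = ∂_x³ φ + 3(∂_x² φ)φ + 3(∂_x φ)² + 3(∂_x φ)φ². -/
attribute [local instance] Matrix.normedAddCommGroup Matrix.normedSpace

/-- Partial derivative in the `x`-direction of a function of three real variables. -/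
noncomputable def pdx {E : Type*} [NormedAddCommGroup E] [NormedSpace ℝ E]
    (f : ℝ × ℝ × ℝ → E) : ℝ × ℝ × ℝ → E :=
  fun p => fderiv ℝ f p (1, 0, 0)

/-- Partial derivative in the `y`-direction of a function of three real variables. -/
noncomputable def pdy {E : Type*} [NormedAddCommGroup E] [NormedSpace ℝ E]
    (f : ℝ × ℝ × ℝ → E) : ℝ × ℝ × ℝ → E :=
  fun p => fderiv ℝ f p (0, 1, 0)

/-- Partial derivative in the `t`-direction of a function of three real variables. -/
noncomputable def pdt {E : Type*} [NormedAddCommGroup E] [NormedSpace ℝ E]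
    (f : ℝ × ℝ × ℝ → E) : ℝ × ℝ × ℝ → E :=
  fun p => fderiv ℝ f p (0, 0, 1)

section Aux

lemma top_add_one_le : ((⊤ : ℕ∞) : WithTop ℕ∞) + 1 ≤ ((⊤ : ℕ∞) : WithTop ℕ∞) := by
  norm_cast

lemma one_le_topc : (1 : WithTop ℕ∞) ≤ ((⊤ : ℕ∞) : WithTop ℕ∞) := by
  exact_mod_cast (le_top : (1 : ℕ∞) ≤ ⊤)

lemma top_ne_zeroc : ((⊤ : ℕ∞) : WithTop ℕ∞) ≠ 0 := by simp

lemma contDiff_fderiv_apply {E F : Type*} [NormedAddCommGroup E] [NormedSpace ℝ E]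
    [NormedAddCommGroup F] [NormedSpace ℝ F] {f : E → F}
    (hf : ContDiff ℝ ((⊤ : ℕ∞) : WithTop ℕ∞) f) (v : E) :
    ContDiff ℝ ((⊤ : ℕ∞) : WithTop ℕ∞) (fun p => fderiv ℝ f p v) :=
  (hf.fderiv_right top_add_one_le).clm_apply contDiff_const

lemma fderiv_apply_comm {E F : Type*} [NormedAddCommGroup E] [NormedSpace ℝ E]
    [NormedAddCommGroup F] [NormedSpace ℝ F] {f : E → F}
    (hf : ContDiff ℝ ((⊤ : ℕ∞) : WithTop ℕ∞) f) (p v w : E) :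
    fderiv ℝ (fun q => fderiv ℝ f q v) p w = fderiv ℝ (fun q => fderiv ℝ f q w) p v := by
  have hsym : IsSymmSndFDerivAt ℝ f p :=
    hf.contDiffAt.isSymmSndFDerivAt (by
      have : ((2 : ℕ∞) : WithTop ℕ∞) ≤ ((⊤ : ℕ∞) : WithTop ℕ∞) := by exact_mod_cast le_top
      simpa using this)
  have hd : DifferentiableAt ℝ (fderiv ℝ f) p :=
    ((hf.fderiv_right top_add_one_le).differentiable top_ne_zeroc).differentiableAt
  have key : ∀ u : E, fderiv ℝ (fun q => fderiv ℝ f q u) p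
      = (fderiv ℝ (fderiv ℝ f) p).flip u := by
    intro u
    have h1 := fderiv_clm_apply (𝕜 := ℝ) hd (differentiableAt_const u)
    ext w
    simp [h1]
  rw [key v, key w]
  simpa using hsym w v

lemma pdx_sub {E : Type*} [NormedAddCommGroup E] [NormedSpace ℝ E]
    {g h : ℝ × ℝ × ℝ → E} {p : ℝ × ℝ × ℝ}
    (hg : DifferentiableAt ℝ g p) (hh : DifferentiableAt ℝ h p) :
    pdx (fun q => g q - h q) p = pdx g p - pdx h p := by
  simp only [pdx, fderiv_fun_sub hg hh, ContinuousLinearMap.sub_apply]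

variable {n : ℕ}

local notation "M" n => Matrix (Fin n) (Fin n) ℝ

/-- Matrix multiplication as a continuous bilinear map (in finite dimension). -/
noncomputable def matMulCLM (n : ℕ) :
    (M n) →L[ℝ] (M n) →L[ℝ] (M n) :=
  LinearMap.toContinuousLinearMap
    ((LinearMap.toContinuousLinearMap :
        ((M n) →ₗ[ℝ] (M n)) ≃ₗ[ℝ] ((M n) →L[ℝ] (M n))).toLinearMap.comp
      (LinearMap.mul ℝ (M n)))

lemma matMulCLM_apply (a b : M n) : matMulCLM n a b = a * b := rfl

lemma isBoundedBilinearMap_matMul :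
    IsBoundedBilinearMap ℝ (fun q : (M n) × (M n) => q.1 * q.2) :=
  (matMulCLM n).isBoundedBilinearMap

lemma contDiff_fun_mul {g h : ℝ × ℝ × ℝ → M n}
    (hg : ContDiff ℝ ((⊤ : ℕ∞) : WithTop ℕ∞) g) (hh : ContDiff ℝ ((⊤ : ℕ∞) : WithTop ℕ∞) h) :
    ContDiff ℝ ((⊤ : ℕ∞) : WithTop ℕ∞) (fun p => g p * h p) :=
  isBoundedBilinearMap_matMul.contDiff.comp (hg.prodMk hh)

lemma pdx_mul {g h : ℝ × ℝ × ℝ → M n} {p : ℝ × ℝ × ℝ}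
    (hg : DifferentiableAt ℝ g p) (hh : DifferentiableAt ℝ h p) :
    pdx (fun q => g q * h q) p = g p * pdx h p + pdx g p * h p := by
  have H := ((isBoundedBilinearMap_matMul (n := n)).hasFDerivAt
      (g p, h p)).comp p (hg.hasFDerivAt.prodMk hh.hasFDerivAt)
  have H' : HasFDerivAt (fun q => g q * h q)
      (((isBoundedBilinearMap_matMul (n := n)).deriv (g p, h p)).comp
        ((fderiv ℝ g p).prod (fderiv ℝ h p))) p := H
  have H2 : pdx (fun q => g q * h q) p
      = (isBoundedBilinearMap_matMul (n := n)).deriv (g p, h p) (pdx g p, pdx h p) := by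
    simp only [pdx, H'.fderiv, ContinuousLinearMap.coe_comp', Function.comp_apply,
      ContinuousLinearMap.prod_apply]
    rfl
  rw [H2, IsBoundedBilinearMap.deriv_apply]

lemma pdt_mul {g h : ℝ × ℝ × ℝ → M n} {p : ℝ × ℝ × ℝ}
    (hg : DifferentiableAt ℝ g p) (hh : DifferentiableAt ℝ h p) :
    pdt (fun q => g q * h q) p = g p * pdt h p + pdt g p * h p := by
  have H := ((isBoundedBilinearMap_matMul (n := n)).hasFDerivAt
      (g p, h p)).comp p (hg.hasFDerivAt.prodMk hh.hasFDerivAt)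
  have H' : HasFDerivAt (fun q => g q * h q)
      (((isBoundedBilinearMap_matMul (n := n)).deriv (g p, h p)).comp
        ((fderiv ℝ g p).prod (fderiv ℝ h p))) p := H
  have H2 : pdt (fun q => g q * h q) p
      = (isBoundedBilinearMap_matMul (n := n)).deriv (g p, h p) (pdt g p, pdt h p) := by
    simp only [pdt, H'.fderiv, ContinuousLinearMap.coe_comp', Function.comp_apply,
      ContinuousLinearMap.prod_apply]
    rfl
  rw [H2, IsBoundedBilinearMap.deriv_apply]

/-- Evaluation of a matrix entry as a continuous linear map. -/
noncomputable def entryCLM (n : ℕ) (i j : Fin n) : (M n) →L[ℝ] ℝ :=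
  LinearMap.toContinuousLinearMap
    ((LinearMap.proj j).comp (LinearMap.proj (R := ℝ) (φ := fun _ : Fin n => Fin n → ℝ) i))

lemma entryCLM_apply (i j : Fin n) (A : M n) : entryCLM n i j A = A i j := rfl

lemma contDiff_entry {g : ℝ × ℝ × ℝ → M n}
    (hg : ContDiff ℝ ((⊤ : ℕ∞) : WithTop ℕ∞) g) (i j : Fin n) :
    ContDiff ℝ ((⊤ : ℕ∞) : WithTop ℕ∞) (fun p => g p i j) :=
  (entryCLM n i j).contDiff.comp hg

lemma contDiff_det {g : ℝ × ℝ × ℝ → M n}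
    (hg : ContDiff ℝ ((⊤ : ℕ∞) : WithTop ℕ∞) g) :
    ContDiff ℝ ((⊤ : ℕ∞) : WithTop ℕ∞) (fun p => (g p).det) := by
  simp_rw [Matrix.det_apply']
  apply ContDiff.sum
  intro σ _
  exact contDiff_const.mul (contDiff_prod fun i _ => contDiff_entry hg (σ i) i)

lemma contDiff_of_entries {g : ℝ × ℝ × ℝ → M n}
    (hg : ∀ i j, ContDiff ℝ ((⊤ : ℕ∞) : WithTop ℕ∞) (fun p => g p i j)) :
    ContDiff ℝ ((⊤ : ℕ∞) : WithTop ℕ∞) g := by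
  apply contDiff_pi.mpr
  intro i
  exact contDiff_pi.mpr (hg i)

end Aux

/-- Cole–Hopf: an invertible solution `f` of the first two heat hierarchy
equations `f_y = f_xx`, `f_t = f_xxx` gives, via `φ = f_x f⁻¹`, a solution of
the second noncommutative Burgers hierarchy equation
`φ_t = φ_xxx + 3 φ_xx φ + 3 φ_x² + 3 φ_x φ²`. -/
theorem second_burgers_of_heat (n : ℕ) (f : ℝ × ℝ × ℝ → Matrix (Fin n) (Fin n) ℝ)
    (hf : ContDiff ℝ (⊤ : ℕ∞) f)
    (hinv : ∀ p, IsUnit (f p))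
    (hheat2 : ∀ p, pdy f p = pdx (pdx f) p)
    (hheat3 : ∀ p, pdt f p = pdx (pdx (pdx f)) p)
    (φ : ℝ × ℝ × ℝ → Matrix (Fin n) (Fin n) ℝ)
    (hφ : ∀ p, φ p = pdx f p * (f p)⁻¹) :
    ∀ p, pdt φ p = pdx (pdx (pdx φ)) p + 3 • (pdx (pdx φ) p * φ p)
        + 3 • (pdx φ p * pdx φ p) + 3 • (pdx φ p * (φ p * φ p)) := by
  classical
  -- the inverse function
  set G : ℝ × ℝ × ℝ → Matrix (Fin n) (Fin n) ℝ := fun p => (f p)⁻¹ with hGdef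
  have hdetu : ∀ p, IsUnit (f p).det := fun p => (Matrix.isUnit_iff_isUnit_det _).mp (hinv p)
  have hdetne : ∀ p, (f p).det ≠ 0 := fun p => (hdetu p).ne_zero
  have hdet : ContDiff ℝ ((⊤ : ℕ∞) : WithTop ℕ∞) (fun p => (f p).det) := contDiff_det hf
  have hadj : ContDiff ℝ ((⊤ : ℕ∞) : WithTop ℕ∞) (fun p => (f p).adjugate) := by
    apply contDiff_of_entries
    intro i j
    simp_rw [Matrix.adjugate_apply]
    apply contDiff_det
    apply contDiff_of_entries
    intro k l
    simp_rw [Matrix.updateRow_apply]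
    by_cases hk : k = j
    · simp only [if_pos hk]
      exact contDiff_const
    · simp only [if_neg hk]
      exact contDiff_entry hf k l
  have hG : ContDiff ℝ ((⊤ : ℕ∞) : WithTop ℕ∞) G := by
    have : G = fun p => ((f p).det)⁻¹ • (f p).adjugate := by
      funext p
      show (f p)⁻¹ = _
      rw [Matrix.inv_def, Ring.inverse_eq_inv]
    rw [this]
    exact (hdet.inv hdetne).smul hadj
  -- successive x-derivatives of f
  set F1 : ℝ × ℝ × ℝ → Matrix (Fin n) (Fin n) ℝ := pdx f with hF1
  set F2 : ℝ × ℝ × ℝ → Matrix (Fin n) (Fin n) ℝ := pdx F1 with hF2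
  set F3 : ℝ × ℝ × ℝ → Matrix (Fin n) (Fin n) ℝ := pdx F2 with hF3
  set F4 : ℝ × ℝ × ℝ → Matrix (Fin n) (Fin n) ℝ := pdx F3 with hF4
  have hcF1 : ContDiff ℝ ((⊤ : ℕ∞) : WithTop ℕ∞) F1 := contDiff_fderiv_apply hf _
  have hcF2 : ContDiff ℝ ((⊤ : ℕ∞) : WithTop ℕ∞) F2 := contDiff_fderiv_apply hcF1 _
  have hcF3 : ContDiff ℝ ((⊤ : ℕ∞) : WithTop ℕ∞) F3 := contDiff_fderiv_apply hcF2 _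
  -- G is a two-sided inverse
  have hGf : ∀ p, G p * f p = 1 := fun p => Matrix.nonsing_inv_mul _ (hdetu p)
  have hfG : ∀ p, f p * G p = 1 := fun p => Matrix.mul_nonsing_inv _ (hdetu p)
  have hdf : ∀ p, DifferentiableAt ℝ f p := fun p => (hf.differentiable top_ne_zeroc).differentiableAt
  have hdG : ∀ p, DifferentiableAt ℝ G p := fun p => (hG.differentiable top_ne_zeroc).differentiableAt
  -- derivative of G
  have hGx : ∀ p, pdx G p = -(G p * (F1 p * G p)) := by
    intro p
    have h0 : pdx (fun q => f q * G q) p = f p * pdx G p + pdx f p * G p :=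
      pdx_mul (hdf p) (hdG p)
    have h1 : pdx (fun q => f q * G q) p = 0 := by
      have : (fun q => f q * G q) = fun _ => (1 : Matrix (Fin n) (Fin n) ℝ) := funext hfG
      simp [pdx, this]
    have h2 : f p * pdx G p + F1 p * G p = 0 := by rw [← h0, h1]
    have h3 : G p * (f p * pdx G p + F1 p * G p) = 0 := by rw [h2, mul_zero]
    calc pdx G p = G p * f p * pdx G p := by rw [hGf, one_mul]
    _ = -(G p * (F1 p * G p)) := by
        rw [mul_assoc]
        linear_combination (norm := noncomm_ring) h3
  have hGt : ∀ p, pdt G p = -(G p * (pdt f p * G p)) := by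
    intro p
    have h0 : pdt (fun q => f q * G q) p = f p * pdt G p + pdt f p * G p :=
      pdt_mul (hdf p) (hdG p)
    have h1 : pdt (fun q => f q * G q) p = 0 := by
      have : (fun q => f q * G q) = fun _ => (1 : Matrix (Fin n) (Fin n) ℝ) := funext hfG
      simp [pdt, this]
    have h2 : f p * pdt G p + pdt f p * G p = 0 := by rw [← h0, h1]
    have h3 : G p * (f p * pdt G p + pdt f p * G p) = 0 := by rw [h2, mul_zero]
    calc pdt G p = G p * f p * pdt G p := by rw [hGf, one_mul]
    _ = -(G p * (pdt f p * G p)) := by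
        rw [mul_assoc]
        linear_combination (norm := noncomm_ring) h3
  -- key derivative rule for products g * G
  have key : ∀ g : ℝ × ℝ × ℝ → Matrix (Fin n) (Fin n) ℝ, ContDiff ℝ ((⊤ : ℕ∞) : WithTop ℕ∞) g → ∀ p,
      pdx (fun q => g q * G q) p = pdx g p * G p - (g p * G p) * (F1 p * G p) := by
    intro g hg p
    rw [pdx_mul ((hg.differentiable top_ne_zeroc).differentiableAt) (hdG p), hGx p]
    noncomm_ring
  -- φ in terms of G
  have hφ' : φ = fun q => F1 q * G q := funext hφ
  -- the combinations A_k = F_k * G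
  set A1 : ℝ × ℝ × ℝ → Matrix (Fin n) (Fin n) ℝ := fun q => F1 q * G q with hA1
  set A2 : ℝ × ℝ × ℝ → Matrix (Fin n) (Fin n) ℝ := fun q => F2 q * G q with hA2
  set A3 : ℝ × ℝ × ℝ → Matrix (Fin n) (Fin n) ℝ := fun q => F3 q * G q with hA3
  set A4 : ℝ × ℝ × ℝ → Matrix (Fin n) (Fin n) ℝ := fun q => F4 q * G q with hA4
  have hcA1 : ContDiff ℝ ((⊤ : ℕ∞) : WithTop ℕ∞) A1 := contDiff_fun_mul hcF1 hG
  have hcA2 : ContDiff ℝ ((⊤ : ℕ∞) : WithTop ℕ∞) A2 := contDiff_fun_mul hcF2 hG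
  have hcA3 : ContDiff ℝ ((⊤ : ℕ∞) : WithTop ℕ∞) A3 := contDiff_fun_mul hcF3 hG
  have hdA1 : ∀ p, DifferentiableAt ℝ A1 p :=
    fun p => (hcA1.differentiable top_ne_zeroc).differentiableAt
  have hdA2 : ∀ p, DifferentiableAt ℝ A2 p :=
    fun p => (hcA2.differentiable top_ne_zeroc).differentiableAt
  have hdA3 : ∀ p, DifferentiableAt ℝ A3 p :=
    fun p => (hcA3.differentiable top_ne_zeroc).differentiableAt
  have hdmul : ∀ (g h : ℝ × ℝ × ℝ → Matrix (Fin n) (Fin n) ℝ), (∀ p, DifferentiableAt ℝ g p) →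
      (∀ p, DifferentiableAt ℝ h p) → ∀ p, DifferentiableAt ℝ (fun q => g q * h q) p := by
    intro g h hg hh p
    exact (isBoundedBilinearMap_matMul.differentiableAt _).comp p ((hg p).prodMk (hh p))
  have hA1x : pdx A1 = fun p => A2 p - A1 p * A1 p := funext fun p => key F1 hcF1 p
  have hA2x : pdx A2 = fun p => A3 p - A2 p * A1 p := funext fun p => key F2 hcF2 p
  have hA3x : pdx A3 = fun p => A4 p - A3 p * A1 p := funext fun p => key F3 hcF3 p
  -- first x-derivative of φ
  have hφx : pdx φ = fun p => A2 p - A1 p * A1 p := by rw [hφ']; exact hA1x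
  -- second x-derivative of φ
  have hφxx : pdx (pdx φ) = fun p =>
      (A3 p - A2 p * A1 p) - ((A2 p - A1 p * A1 p) * A1 p + A1 p * (A2 p - A1 p * A1 p)) := by
    rw [hφx]
    funext p
    rw [pdx_sub (hdA2 p) (hdmul A1 A1 hdA1 hdA1 p),
      pdx_mul (hdA1 p) (hdA1 p), hA1x, hA2x]
    noncomm_ring
  -- third x-derivative of φ
  have hφxxx : ∀ p, pdx (pdx (pdx φ)) p =
      ((A4 p - A3 p * A1 p) - ((A3 p - A2 p * A1 p) * A1 p + A2 p * (A2 p - A1 p * A1 p)))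
      - ((((A3 p - A2 p * A1 p) - ((A2 p - A1 p * A1 p) * A1 p + A1 p * (A2 p - A1 p * A1 p))) * A1 p
            + (A2 p - A1 p * A1 p) * (A2 p - A1 p * A1 p))
         + ((A2 p - A1 p * A1 p) * (A2 p - A1 p * A1 p)
            + A1 p * ((A3 p - A2 p * A1 p) - ((A2 p - A1 p * A1 p) * A1 p + A1 p * (A2 p - A1 p * A1 p))))) := by
    intro p
    rw [hφxx]
    have d1 : ∀ q', DifferentiableAt ℝ (fun q => A2 q * A1 q) q' := hdmul A2 A1 hdA2 hdA1
    have dφx : ∀ q', DifferentiableAt ℝ (fun q => A2 q - A1 q * A1 q) q' :=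
      fun q' => (hdA2 q').sub (hdmul A1 A1 hdA1 hdA1 q')
    have dc1 : DifferentiableAt ℝ (fun q => A3 q - A2 q * A1 q) p := (hdA3 p).sub (d1 p)
    have d2 : ∀ q', DifferentiableAt ℝ (fun q => (A2 q - A1 q * A1 q) * A1 q) q' :=
      hdmul _ A1 dφx hdA1
    have d3 : ∀ q', DifferentiableAt ℝ (fun q => A1 q * (A2 q - A1 q * A1 q)) q' :=
      hdmul A1 _ hdA1 dφx
    have hφx' : pdx (fun q => A2 q - A1 q * A1 q) p
        = A3 p - A2 p * A1 p - ((A2 p - A1 p * A1 p) * A1 p + A1 p * (A2 p - A1 p * A1 p)) := by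
      rw [pdx_sub (hdA2 p) (hdmul A1 A1 hdA1 hdA1 p), pdx_mul (hdA1 p) (hdA1 p), hA1x, hA2x]
      noncomm_ring
    rw [pdx_sub dc1 ((d2 p).fun_add (d3 p))]
    rw [pdx_sub (hdA3 p) (d1 p), pdx_mul (hdA2 p) (hdA1 p)]
    rw [show pdx (fun q => (A2 q - A1 q * A1 q) * A1 q + A1 q * (A2 q - A1 q * A1 q)) p
        = pdx (fun q => (A2 q - A1 q * A1 q) * A1 q) p
          + pdx (fun q => A1 q * (A2 q - A1 q * A1 q)) p by
      simp only [pdx, fderiv_fun_add (d2 p) (d3 p), ContinuousLinearMap.add_apply]]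
    rw [pdx_mul (dφx p) (hdA1 p), pdx_mul (hdA1 p) (dφx p), hφx', hA1x, hA2x, hA3x]
    noncomm_ring
  -- t-derivative of φ
  have hft : pdt f = F3 := funext hheat3
  have hφt : ∀ p, pdt φ p = A4 p - A1 p * A3 p := by
    intro p
    rw [hφ']
    rw [pdt_mul ((hcF1.differentiable top_ne_zeroc).differentiableAt) (hdG p), hGt p]
    have hF1t : pdt F1 p = F4 p := by
      have h1 : pdt F1 p = pdx (pdt f) p := by
        exact
          fderiv_apply_comm hf p ((1:ℝ),(0:ℝ),(0:ℝ)) ((0:ℝ),(0:ℝ),(1:ℝ))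
      rw [h1, hft]
    rw [hF1t, hft]
    simp only [hA1, hA3, hA4]
    noncomm_ring
  -- final algebraic identity
  intro p
  rw [hφt p, hφxxx p, hφxx, hφx, hφ']
  have h3s : ∀ x : Matrix (Fin n) (Fin n) ℝ, (3 : ℕ) • x = x + x + x := fun x => by
    rw [succ_nsmul, two_nsmul]
  rw [h3s, h3s, h3s]
  noncomm_ring
end

section
/- Let φ : ℝ³ → Mₙ(ℝ) be infinitely differentiable and satisfy the first two noncommutative Burgers hierarchy equations φ_y = φ_xx + 2φ_x φ and φ_t = φ_xxx + 3φ_xx φ + 3φ_x² + 3φ_x φ². Then φ satisfies the noncommutative potential KP equation ∂_x(4φ_t − φ_xxx − 6φ_x²) − 3φ_yy + 6(φ_x φ_y − φ_y φ_x) = 0. -/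
attribute [local instance] Matrix.normedAddCommGroup Matrix.normedSpace

/-! The two Burgers flows express `φ_y` and `φ_t` through `x`-derivatives of `φ`. Substituting them
into the pKP expression and using nothing but the Leibniz rule and `∂ₓ∂_y = ∂_y∂ₓ`, everything
cancels, so the implication holds in any ring with two commuting derivations. Smooth matrix-valued
functions, with the partial derivatives, form such a ring. -/

open scoped ContDiff

theorem fderiv_fderiv_apply_comm {E F : Type*} [NormedAddCommGroup E] [NormedSpace ℝ E]
    [NormedAddCommGroup F] [NormedSpace ℝ F] {f : E → F} (hf : ContDiff ℝ 2 f) (p v w : E) :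
    fderiv ℝ (fun q => fderiv ℝ f q w) p v = fderiv ℝ (fun q => fderiv ℝ f q v) p w := by
  have hD := (hf.fderiv_right (m := 1) le_rfl).differentiable one_ne_zero p
  have hsymm := hf.contDiffAt.isSymmSndFDerivAt (x := p) (by simp)
  rw [(hD.hasFDerivAt.clm_apply (hasFDerivAt_const w p)).fderiv,
    (hD.hasFDerivAt.clm_apply (hasFDerivAt_const v p)).fderiv]
  simpa using hsymm v w

theorem pKP_of_burgers_of_derivations {R : Type*} [Ring R] (Dx Dy : R →+ R)
    (hDx : ∀ a b, Dx (a * b) = Dx a * b + a * Dx b)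
    (hDy : ∀ a b, Dy (a * b) = Dy a * b + a * Dy b)
    (hcomm : ∀ a, Dy (Dx a) = Dx (Dy a)) (φ φt : R)
    (hb1 : Dy φ = Dx (Dx φ) + 2 • (Dx φ * φ))
    (hb2 : φt = Dx (Dx (Dx φ)) + 3 • (Dx (Dx φ) * φ) + 3 • (Dx φ * Dx φ)
      + 3 • (Dx φ * (φ * φ))) :
    Dx (4 • φt - Dx (Dx (Dx φ)) - 6 • (Dx φ * Dx φ)) - 3 • Dy (Dy φ)
      + 6 • (Dx φ * Dy φ - Dy φ * Dx φ) = 0 := by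
  subst hb2
  simp only [map_add, map_sub, map_nsmul, hDx, hDy, hcomm, hb1]
  noncomm_ring

variable (ι : Type*) [Fintype ι] [DecidableEq ι]

-- The sup norm on matrices is not submultiplicative, so there is no `NormedRing` to supply
-- `ContinuousLinearMap.mul`; continuity comes from finite dimensionality instead.
noncomputable def Matrix.mulCLM : Matrix ι ι ℝ →L[ℝ] Matrix ι ι ℝ →L[ℝ] Matrix ι ι ℝ :=
  LinearMap.toContinuousLinearMap
    (LinearMap.toContinuousLinearMap.toLinearMap ∘ₗ LinearMap.mul ℝ (Matrix ι ι ℝ))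

variable {ι} {E : Type*} [NormedAddCommGroup E] [NormedSpace ℝ E]

theorem fderiv_matrix_mul_apply {f g : E → Matrix ι ι ℝ} {p : E} (hf : DifferentiableAt ℝ f p)
    (hg : DifferentiableAt ℝ g p) (v : E) :
    fderiv ℝ (fun q => f q * g q) p v = fderiv ℝ f p v * g p + f p * fderiv ℝ g p v := by
  have h := congrArg (· v) ((Matrix.mulCLM ι).fderiv_of_bilinear hf hg)
  simp only [add_apply] at h
  exact h.trans (add_comm _ _)

variable (ι E)

def smoothMatrixFunctions : Subring (E → Matrix ι ι ℝ) where
  carrier := {f | ContDiff ℝ ∞ f}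
  mul_mem' {f g} (hf : ContDiff ℝ ∞ f) (hg : ContDiff ℝ ∞ g) :=
    (Matrix.mulCLM ι).isBoundedBilinearMap.contDiff.comp (hf.prodMk hg)
  one_mem' := show ContDiff ℝ ∞ fun _ => 1 from contDiff_const
  add_mem' {f g} (hf : ContDiff ℝ ∞ f) (hg : ContDiff ℝ ∞ g) := hf.add hg
  zero_mem' := show ContDiff ℝ ∞ fun _ => 0 from contDiff_const
  neg_mem' {f} (hf : ContDiff ℝ ∞ f) := hf.neg

variable {ι E}

namespace smoothMatrixFunctions

protected theorem mem_iff {f : E → Matrix ι ι ℝ} :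
    f ∈ smoothMatrixFunctions ι E ↔ ContDiff ℝ ∞ f :=
  Iff.rfl

protected theorem contDiff (f : smoothMatrixFunctions ι E) :
    ContDiff ℝ ∞ (f : E → Matrix ι ι ℝ) :=
  f.2

protected theorem differentiable (f : smoothMatrixFunctions ι E) :
    Differentiable ℝ (f : E → Matrix ι ι ℝ) :=
  (smoothMatrixFunctions.contDiff f).differentiable (by simp)

noncomputable def lineDeriv (v : E) : smoothMatrixFunctions ι E →+ smoothMatrixFunctions ι E where
  toFun f := ⟨fun p => fderiv ℝ (f : E → Matrix ι ι ℝ) p v,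
    smoothMatrixFunctions.mem_iff.2 <|
      ((smoothMatrixFunctions.contDiff f).fderiv_right (m := ∞) le_rfl).clm_apply contDiff_const⟩
  map_zero' := by ext1; funext p; simp
  map_add' f g := by
    ext1; funext p
    exact congrArg (· v) (fderiv_add (smoothMatrixFunctions.differentiable f p)
      (smoothMatrixFunctions.differentiable g p))

theorem lineDeriv_mul (v : E) (f g : smoothMatrixFunctions ι E) :
    lineDeriv v (f * g) = lineDeriv v f * g + f * lineDeriv v g := by
  ext1; funext p
  exact fderiv_matrix_mul_apply (smoothMatrixFunctions.differentiable f p)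
      (smoothMatrixFunctions.differentiable g p) v

theorem lineDeriv_comm (v w : E) (f : smoothMatrixFunctions ι E) :
    lineDeriv v (lineDeriv w f) = lineDeriv w (lineDeriv v f) := by
  ext1; funext p
  exact fderiv_fderiv_apply_comm ((smoothMatrixFunctions.contDiff f).of_le (by norm_cast)) ..

end smoothMatrixFunctions

open smoothMatrixFunctions

/-- Any solution of the first two noncommutative Burgers hierarchy equations
also solves the noncommutative potential KP equation. -/
theorem pKP_of_burgers (n : ℕ) (φ : ℝ × ℝ × ℝ → Matrix (Fin n) (Fin n) ℝ)
    (hφ : ContDiff ℝ (⊤ : ℕ∞) φ)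
    (hb1 : ∀ p, pdy φ p = pdx (pdx φ) p + 2 • (pdx φ p * φ p))
    (hb2 : ∀ p, pdt φ p = pdx (pdx (pdx φ)) p + 3 • (pdx (pdx φ) p * φ p)
        + 3 • (pdx φ p * pdx φ p) + 3 • (pdx φ p * (φ p * φ p))) :
    ∀ p, pdx (fun q => (4 : ℝ) • pdt φ q - pdx (pdx (pdx φ)) q
          - (6 : ℝ) • (pdx φ q * pdx φ q)) p
        - (3 : ℝ) • pdy (pdy φ) p
        + (6 : ℝ) • (pdx φ p * pdy φ p - pdy φ p * pdx φ p) = 0 := by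
  intro p
  let Φ : smoothMatrixFunctions (Fin n) (ℝ × ℝ × ℝ) := ⟨φ, hφ⟩
  have key := pKP_of_burgers_of_derivations (lineDeriv (1, 0, 0)) (lineDeriv (0, 1, 0))
    (lineDeriv_mul _) (lineDeriv_mul _) (lineDeriv_comm _ _) Φ (lineDeriv (0, 0, 1) Φ)
    (Subtype.ext (funext hb1)) (Subtype.ext (funext hb2))
  simp only [ofNat_smul_eq_nsmul ℝ]
  -- evaluating `key` at `p` gives the goal after unfolding `pdx`, `pdy`, `pdt`
  exact congrFun (congrArg Subtype.val key) p
end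

section
/- Let u ∈ ℝ^M and v ∈ ℝ^N be constant vectors and set Q := v·uᵀ (an N×M matrix of rank at most one). Let φ : ℝ³ → (M×N real matrices) be infinitely differentiable and satisfy the matrix pKP equation with product Q: ∂_x(4φ_t − φ_xxx − 6 φ_x Q φ_x) = 3φ_yy − 6(φ_x Q φ_y − φ_y Q φ_x). Then the scalar function ϕ := tr(Q·φ) = uᵀ·φ·v satisfies the scalar pKP equation ∂_x(4ϕ_t − ϕ_xxx − 6 ϕ_x²) − 3ϕ_yy = 0. -/
/-! For `Q = v uᵀ` one has `Q A Q = tr(Q A) • Q`, so the linear functional `L = tr(Q ·)` satisfies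
`L (A Q B) = L A * L B`. Applying `L`, which commutes with partial derivatives, to the matrix pKP
equation turns the quadratic term into `6 (ϕ_x)²` and the commutator term into
`L(φ_x) L(φ_y) - L(φ_y) L(φ_x) = 0`. -/

attribute [local instance] Matrix.normedAddCommGroup Matrix.normedSpace

open Matrix

section RankOne

variable {m n R : Type*} [Fintype m] [Fintype n] [CommSemiring R]

theorem vecMulVec_mul_mul_vecMulVec (v : n → R) (u : m → R) (A : Matrix m n R) :
    vecMulVec v u * A * vecMulVec v u = trace (vecMulVec v u * A) • vecMulVec v u := by
  rw [vecMulVec_mul, vecMulVec_mul_vecMulVec, vecMulVec_smul, trace_vecMulVec, dotProduct_comm]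

theorem trace_vecMulVec_mul_mul_vecMulVec_mul (v : n → R) (u : m → R) (A B : Matrix m n R) :
    trace (vecMulVec v u * (A * vecMulVec v u * B)) =
      trace (vecMulVec v u * A) * trace (vecMulVec v u * B) := by
  rw [← Matrix.mul_assoc, ← Matrix.mul_assoc, vecMulVec_mul_mul_vecMulVec, smul_mul, trace_smul,
    smul_eq_mul]

end RankOne

theorem ContDiff.matrix_mul {𝕜 E : Type*} [NontriviallyNormedField 𝕜] [NormedAddCommGroup E]
    [NormedSpace 𝕜 E] {l m n : Type*} [Fintype l] [Fintype m] [Fintype n] {k : WithTop ℕ∞}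
    {f : E → Matrix l m 𝕜} {g : E → Matrix m n 𝕜} (hf : ContDiff 𝕜 k f) (hg : ContDiff 𝕜 k g) :
    ContDiff 𝕜 k fun x => f x * g x :=
  contDiff_pi.2 fun i => contDiff_pi.2 fun j => ContDiff.sum fun r _ =>
    (contDiff_pi.1 (contDiff_pi.1 hf i) r).mul (contDiff_pi.1 (contDiff_pi.1 hg r) j)

theorem ContinuousLinearMap.fderiv_comp_apply {𝕜 E F G : Type*} [NontriviallyNormedField 𝕜]
    [NormedAddCommGroup E] [NormedSpace 𝕜 E] [NormedAddCommGroup F] [NormedSpace 𝕜 F]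
    [NormedAddCommGroup G] [NormedSpace 𝕜 G] (L : E →L[𝕜] F) {f : G → E} {x : G}
    (hf : DifferentiableAt 𝕜 f x) (w : G) :
    fderiv 𝕜 (fun y => L (f y)) x w = L (fderiv 𝕜 f x w) := by
  rw [fderiv_fun_comp x L.differentiableAt hf, L.fderiv]
  rfl

theorem ContDiff.fderiv_apply_const {𝕜 E G : Type*} [NontriviallyNormedField 𝕜]
    [NormedAddCommGroup E] [NormedSpace 𝕜 E] [NormedAddCommGroup G] [NormedSpace 𝕜 G] {f : G → E}
    (hf : ContDiff 𝕜 (⊤ : ℕ∞) f) (w : G) :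
    ContDiff 𝕜 (⊤ : ℕ∞) fun p => fderiv 𝕜 f p w :=
  (hf.fderiv_right (by exact_mod_cast le_top)).clm_apply contDiff_const

section Partial

variable {E F : Type*} [NormedAddCommGroup E] [NormedSpace ℝ E]
  [NormedAddCommGroup F] [NormedSpace ℝ F] {f : ℝ × ℝ × ℝ → E}

theorem ContinuousLinearMap.pdx_comp (L : E →L[ℝ] F) (hf : Differentiable ℝ f) :
    pdx (fun q => L (f q)) = fun q => L (pdx f q) :=
  funext fun q => L.fderiv_comp_apply (hf q) _

theorem ContinuousLinearMap.pdy_comp (L : E →L[ℝ] F) (hf : Differentiable ℝ f) :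
    pdy (fun q => L (f q)) = fun q => L (pdy f q) :=
  funext fun q => L.fderiv_comp_apply (hf q) _

theorem ContinuousLinearMap.pdt_comp (L : E →L[ℝ] F) (hf : Differentiable ℝ f) :
    pdt (fun q => L (f q)) = fun q => L (pdt f q) :=
  funext fun q => L.fderiv_comp_apply (hf q) _

theorem ContDiff.pdx (hf : ContDiff ℝ (⊤ : ℕ∞) f) : ContDiff ℝ (⊤ : ℕ∞) (pdx f) :=
  hf.fderiv_apply_const _

theorem ContDiff.pdy (hf : ContDiff ℝ (⊤ : ℕ∞) f) : ContDiff ℝ (⊤ : ℕ∞) (pdy f) :=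
  hf.fderiv_apply_const _

theorem ContDiff.pdt (hf : ContDiff ℝ (⊤ : ℕ∞) f) : ContDiff ℝ (⊤ : ℕ∞) (pdt f) :=
  hf.fderiv_apply_const _

end Partial

section PKP

variable {m n : Type*} [Fintype m] [Fintype n]

def IsMatrixPKPSolution (Q : Matrix n m ℝ) (φ : ℝ × ℝ × ℝ → Matrix m n ℝ) : Prop :=
  ∀ p, pdx (fun q => (4 : ℝ) • pdt φ q - pdx (pdx (pdx φ)) q
        - (6 : ℝ) • (pdx φ q * Q * pdx φ q)) p
      = (3 : ℝ) • pdy (pdy φ) p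
        - (6 : ℝ) • (pdx φ p * Q * pdy φ p - pdy φ p * Q * pdx φ p)

def IsPKPSolution (ϕ : ℝ × ℝ × ℝ → ℝ) : Prop :=
  ∀ p, pdx (fun q => 4 * pdt ϕ q - pdx (pdx (pdx ϕ)) q - 6 * (pdx ϕ q) ^ 2) p
    - 3 * pdy (pdy ϕ) p = 0

theorem IsMatrixPKPSolution.isPKPSolution_comp {Q : Matrix n m ℝ} {φ : ℝ × ℝ × ℝ → Matrix m n ℝ}
    (hpKP : IsMatrixPKPSolution Q φ) (hφ : ContDiff ℝ (⊤ : ℕ∞) φ) (L : Matrix m n ℝ →L[ℝ] ℝ)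
    (hL : ∀ A B, L (A * Q * B) = L A * L B) :
    IsPKPSolution fun q => L (φ q) := by
  -- Stated here rather than rewritten with directly, so that the coercion of `L` is elaborated
  -- with `Matrix.module`, as in the goal, instead of `NormedSpace.toModule`.
  have hx {f : ℝ × ℝ × ℝ → Matrix m n ℝ} (hf : ContDiff ℝ (⊤ : ℕ∞) f) :
      pdx (fun q => L (f q)) = fun q => L (pdx f q) :=
    L.pdx_comp (hf.differentiable (by simp))
  have hy {f : ℝ × ℝ × ℝ → Matrix m n ℝ} (hf : ContDiff ℝ (⊤ : ℕ∞) f) :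
      pdy (fun q => L (f q)) = fun q => L (pdy f q) :=
    L.pdy_comp (hf.differentiable (by simp))
  have ht {f : ℝ × ℝ × ℝ → Matrix m n ℝ} (hf : ContDiff ℝ (⊤ : ℕ∞) f) :
      pdt (fun q => L (f q)) = fun q => L (pdt f q) :=
    L.pdt_comp (hf.differentiable (by simp))
  have hF : ContDiff ℝ (⊤ : ℕ∞) fun q => (4 : ℝ) • pdt φ q - pdx (pdx (pdx φ)) q
      - (6 : ℝ) • (pdx φ q * Q * pdx φ q) :=
    (hφ.pdt.const_smul _).sub hφ.pdx.pdx.pdx |>.sub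
      (((hφ.pdx.matrix_mul contDiff_const).matrix_mul hφ.pdx).const_smul _)
  intro p
  rw [ht hφ, hx hφ, hx hφ.pdx, hx hφ.pdx.pdx, hy hφ, hy hφ.pdy]
  have hscalar : (fun q => 4 * L (pdt φ q) - L (pdx (pdx (pdx φ)) q) - 6 * L (pdx φ q) ^ 2) =
      fun q => L ((4 : ℝ) • pdt φ q - pdx (pdx (pdx φ)) q - (6 : ℝ) • (pdx φ q * Q * pdx φ q)) := by
    funext q
    simp only [map_sub, map_smul, smul_eq_mul, hL]
    ring
  rw [hscalar, hx hF]
  simp only [hpKP p, map_sub, map_smul, smul_eq_mul, hL]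
  ring

end PKP

theorem scalar_pKP_of_rank_one_general (M N : ℕ)
    (u : Fin M → ℝ) (v : Fin N → ℝ)
    (Q : Matrix (Fin N) (Fin M) ℝ) (hQ : Q = Matrix.vecMulVec v u)
    (φ : ℝ × ℝ × ℝ → Matrix (Fin M) (Fin N) ℝ)
    (hφ : ContDiff ℝ (⊤ : ℕ∞) φ)
    (hpKP : ∀ p, pdx (fun q => (4 : ℝ) • pdt φ q - pdx (pdx (pdx φ)) q
          - (6 : ℝ) • (pdx φ q * Q * pdx φ q)) p
        = (3 : ℝ) • pdy (pdy φ) p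
          - (6 : ℝ) • (pdx φ p * Q * pdy φ p - pdy φ p * Q * pdx φ p))
    (ϕ : ℝ × ℝ × ℝ → ℝ)
    (hϕ : ∀ p, ϕ p = Matrix.trace (Q * φ p)) :
    ∀ p, pdx (fun q => 4 * pdt ϕ q - pdx (pdx (pdx ϕ)) q
          - 6 * (pdx ϕ q) ^ 2) p
        - 3 * pdy (pdy ϕ) p = 0 := by
  let L : Matrix (Fin M) (Fin N) ℝ →L[ℝ] ℝ :=
    LinearMap.toContinuousLinearMap (traceLinearMap _ ℝ ℝ ∘ₗ mulLeftLinearMap _ ℝ Q)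
  have hL (A B : Matrix (Fin M) (Fin N) ℝ) : L (A * Q * B) = L A * L B := by
    subst hQ
    exact trace_vecMulVec_mul_mul_vecMulVec_mul v u A B
  obtain rfl : ϕ = fun q => L (φ q) := funext hϕ
  exact IsMatrixPKPSolution.isPKPSolution_comp hpKP hφ L hL

/-- Rank-one reduction: if `Q = v uᵀ` has rank one and `φ` solves the matrix
pKP equation with product `Q`, then `ϕ = tr(Q φ)` solves the scalar pKP
equation. -/
theorem scalar_pKP_of_rank_one (M N : ℕ) (hM : 0 < M) (hN : 0 < N)
    (u : Fin M → ℝ) (v : Fin N → ℝ)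
    (Q : Matrix (Fin N) (Fin M) ℝ) (hQ : Q = Matrix.vecMulVec v u)
    (φ : ℝ × ℝ × ℝ → Matrix (Fin M) (Fin N) ℝ)
    (hφ : ContDiff ℝ (⊤ : ℕ∞) φ)
    (hpKP : ∀ p, pdx (fun q => (4 : ℝ) • pdt φ q - pdx (pdx (pdx φ)) q
          - (6 : ℝ) • (pdx φ q * Q * pdx φ q)) p
        = (3 : ℝ) • pdy (pdy φ) p
          - (6 : ℝ) • (pdx φ p * Q * pdy φ p - pdy φ p * Q * pdx φ p))
    (ϕ : ℝ × ℝ × ℝ → ℝ)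
    (hϕ : ∀ p, ϕ p = Matrix.trace (Q * φ p)) :
    ∀ p, pdx (fun q => 4 * pdt ϕ q - pdx (pdx (pdx ϕ)) q
          - 6 * (pdx ϕ q) ^ 2) p
        - 3 * pdy (pdy ϕ) p = 0 :=
  scalar_pKP_of_rank_one_general M N u v Q hQ φ hφ hpKP ϕ hϕ
end

section
/- Let φ, ψ : ℝ³ → Mₙ(ℝ) be infinitely differentiable with ψ(x,y,t) invertible for all (x,y,t). Suppose φ satisfies the noncommutative pKP equation ∂_x(4φ_t − φ_xxx − 6φ_x²) − 3φ_yy + 6(φ_x φ_y − φ_y φ_x) = 0, and ψ satisfies the associated linear system ψ_y = ψ_xx + 2φ_x ψ and ψ_t = ψ_xxx + 3φ_x ψ_x + (3/2)(φ_y + φ_xx)ψ. Then φ′ := φ + ψ_x·ψ⁻¹ also satisfies the noncommutative pKP equation ∂_x(4φ′_t − φ′_xxx − 6(φ′_x)²) − 3φ′_yy + 6(φ′_x φ′_y − φ′_y φ′_x) = 0. -/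
attribute [local instance] Matrix.normedAddCommGroup Matrix.normedSpace

namespace PKPaux

open Matrix

noncomputable section

/-- generic directional partial derivative -/
def pd {E : Type*} [NormedAddCommGroup E] [NormedSpace ℝ E]
    (v : ℝ × ℝ × ℝ) (f : ℝ × ℝ × ℝ → E) : ℝ × ℝ × ℝ → E :=
  fun p => fderiv ℝ f p v

theorem pdx_eq {E : Type*} [NormedAddCommGroup E] [NormedSpace ℝ E]
    (f : ℝ × ℝ × ℝ → E) : pdx f = pd (1, 0, 0) f := rfl
theorem pdy_eq {E : Type*} [NormedAddCommGroup E] [NormedSpace ℝ E]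
    (f : ℝ × ℝ × ℝ → E) : pdy f = pd (0, 1, 0) f := rfl
theorem pdt_eq {E : Type*} [NormedAddCommGroup E] [NormedSpace ℝ E]
    (f : ℝ × ℝ × ℝ → E) : pdt f = pd (0, 0, 1) f := rfl

abbrev Mat (n : ℕ) := Matrix (Fin n) (Fin n) ℝ
abbrev E3 := ℝ × ℝ × ℝ

variable {n : ℕ}

/-- `Sm f` means `f` is infinitely differentiable. -/
abbrev Sm (f : E3 → Mat n) : Prop := ContDiff ℝ (⊤ : ℕ∞) f

/-- Matrix multiplication as a continuous bilinear map. -/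
def mulCLM (n : ℕ) : Mat n →L[ℝ] Mat n →L[ℝ] Mat n :=
  LinearMap.toContinuousLinearMap
  { toFun := fun a => LinearMap.toContinuousLinearMap (LinearMap.mulLeft ℝ a)
    map_add' := by intro a b; ext c; simp [add_mul]
    map_smul' := by intro r a; ext c; simp [smul_mul_assoc] }

@[fun_prop] theorem smMul {f g : E3 → Mat n} (hf : ContDiff ℝ (⊤ : ℕ∞) f)
    (hg : ContDiff ℝ (⊤ : ℕ∞) g) : ContDiff ℝ (⊤ : ℕ∞) (fun p => f p * g p) :=
  ((mulCLM n).isBoundedBilinearMap.contDiff.comp₂ hf hg : _)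

@[fun_prop] theorem smPd {f : E3 → Mat n} (v : E3) (hf : ContDiff ℝ (⊤ : ℕ∞) f) :
    ContDiff ℝ (⊤ : ℕ∞) (pd v f) := by
  have h1 :=
    hf.fderiv_right (m := ((⊤ : ℕ∞) : WithTop ℕ∞)) (by exact_mod_cast le_top)
  exact h1.clm_apply contDiff_const

theorem dAt {f : E3 → Mat n} {p : E3} (hf : ContDiff ℝ (⊤ : ℕ∞) f) :
    DifferentiableAt ℝ f p :=
  (hf.differentiable (by norm_cast)).differentiableAt

/-! pointwise / function-level derivative rules -/

theorem pd_mul {f g : E3 → Mat n} (v : E3) (hf : ContDiff ℝ (⊤ : ℕ∞) f) (hg : ContDiff ℝ (⊤ : ℕ∞) g) :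
    pd v (fun q => f q * g q) = fun p => pd v f p * g p + f p * pd v g p := by
  funext p
  have h := ((mulCLM n).isBoundedBilinearMap.hasFDerivAt (f p, g p)).comp p
    ((dAt hf).hasFDerivAt.prodMk (dAt hg).hasFDerivAt)
  have h2 : fderiv ℝ (fun q => f q * g q) p =
      ((mulCLM n).isBoundedBilinearMap.deriv (f p, g p)).comp
        ((fderiv ℝ f p).prod (fderiv ℝ g p)) := h.fderiv
  show fderiv ℝ (fun q => f q * g q) p v = _
  rw [h2]
  show mulCLM n (f p) (fderiv ℝ g p v) + mulCLM n (fderiv ℝ f p v) (g p) = _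
  show f p * (fderiv ℝ g p v) + (fderiv ℝ f p v) * g p = _
  rw [add_comm]; rfl

theorem pd_add {f g : E3 → Mat n} (v : E3) (hf : ContDiff ℝ (⊤ : ℕ∞) f) (hg : ContDiff ℝ (⊤ : ℕ∞) g) :
    pd v (fun q => f q + g q) = fun p => pd v f p + pd v g p := by
  funext p; show fderiv ℝ _ p v = _
  rw [fderiv_fun_add (dAt hf) (dAt hg)]; rfl

theorem pd_sub {f g : E3 → Mat n} (v : E3) (hf : ContDiff ℝ (⊤ : ℕ∞) f) (hg : ContDiff ℝ (⊤ : ℕ∞) g) :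
    pd v (fun q => f q - g q) = fun p => pd v f p - pd v g p := by
  funext p; show fderiv ℝ _ p v = _
  rw [fderiv_fun_sub (dAt hf) (dAt hg)]; rfl

theorem pd_smul {f : E3 → Mat n} (c : ℝ) (v : E3) (hf : ContDiff ℝ (⊤ : ℕ∞) f) :
    pd v (fun q => c • f q) = fun p => c • pd v f p := by
  funext p; show fderiv ℝ _ p v = _
  rw [fderiv_fun_const_smul (dAt hf)]; rfl

theorem pd_neg {f : E3 → Mat n} (v : E3) (hf : ContDiff ℝ (⊤ : ℕ∞) f) :
    pd v (fun q => -(f q)) = fun p => -(pd v f p) := by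
  funext p; show fderiv ℝ _ p v = _
  rw [fderiv_fun_neg]; rfl

theorem pd_const (v : E3) (c : Mat n) : pd v (fun _ : E3 => c) = fun _ => 0 := by
  funext p; simp [pd]

/-- Clairaut / symmetry of second derivatives, function-level. -/
theorem pd_swap {f : E3 → Mat n} (hf : Sm f) (v w : E3) :
    pd v (pd w f) = pd w (pd v f) := by
  funext p
  have hsymm : IsSymmSndFDerivAt ℝ f p := by
    apply ContDiffAt.isSymmSndFDerivAt (n := ((2 : ℕ) : WithTop ℕ∞))
    · exact (hf.of_le (by norm_cast)).contDiffAt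
    · norm_num
  have hdf :=
    hf.fderiv_right (m := ((⊤ : ℕ∞) : WithTop ℕ∞)) (by exact_mod_cast le_top)
  have kd : ∀ u : E3, fderiv ℝ (pd u f) p =
      (ContinuousLinearMap.apply ℝ (Mat n) u).comp (fderiv ℝ (fderiv ℝ f) p) := by
    intro u
    have : pd u f = fun q => (ContinuousLinearMap.apply ℝ (Mat n) u) (fderiv ℝ f q) := rfl
    rw [this]
    exact (((ContinuousLinearMap.apply ℝ (Mat n) u).hasFDerivAt.comp p
      (hdf.differentiable (by norm_cast) p).hasFDerivAt)).fderiv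
  show fderiv ℝ (pd w f) p v = fderiv ℝ (pd v f) p w
  rw [kd w, kd v]
  show (ContinuousLinearMap.apply ℝ (Mat n) w) (fderiv ℝ (fderiv ℝ f) p v) =
      (ContinuousLinearMap.apply ℝ (Mat n) v) (fderiv ℝ (fderiv ℝ f) p w)
  exact hsymm v w

/-! smoothness of pointwise matrix inverse -/

theorem smEntry {f : E3 → Mat n} (hf : Sm f) (i j : Fin n) :
    ContDiff ℝ (⊤ : ℕ∞) (fun p => f p i j) :=
  (contDiff_pi.mp ((contDiff_pi.mp hf) i)) j

theorem contDiff_of_entries {f : E3 → Mat n}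
    (h : ∀ i j, ContDiff ℝ (⊤ : ℕ∞) (fun p => f p i j)) : Sm f :=
  contDiff_pi.mpr fun i => contDiff_pi.mpr (h i)

theorem smDet {f : E3 → Mat n} (hf : Sm f) :
    ContDiff ℝ (⊤ : ℕ∞) (fun p => (f p).det) := by
  have : (fun p => (f p).det)
      = fun p => ∑ σ : Equiv.Perm (Fin n), (Equiv.Perm.sign σ : ℝ) * ∏ i, f p (σ i) i := by
    funext p; simp [Matrix.det_apply, Units.smul_def, zsmul_eq_mul]
  rw [this]
  exact ContDiff.sum fun σ _ =>
    contDiff_const.mul (contDiff_prod fun i _ => smEntry hf (σ i) i)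

theorem smAdj {f : E3 → Mat n} (hf : Sm f) :
    ContDiff ℝ (⊤ : ℕ∞) (fun p => (f p).adjugate) := by
  apply contDiff_of_entries; intro i j
  have h1 : (fun p => (f p).adjugate i j)
      = fun p => ((f p).updateRow j (Pi.single i 1)).det := by
    funext p; rw [Matrix.adjugate_apply]
  rw [h1]
  have h2 : Sm (fun p => (f p).updateRow j (Pi.single i 1)) := by
    apply contDiff_of_entries; intro a b
    by_cases hab : a = j
    · subst hab; simp [Matrix.updateRow_self]; exact contDiff_const
    · simp [Matrix.updateRow_ne hab]; exact smEntry hf a b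
  exact smDet h2

theorem smInv {f : E3 → Mat n} (hf : Sm f) (hu : ∀ p, IsUnit (f p)) :
    Sm (fun p => (f p)⁻¹) := by
  have hinv : (fun p => (f p)⁻¹) = fun p => ((f p).det)⁻¹ • (f p).adjugate := by
    funext p; rw [Matrix.inv_def, Ring.inverse_eq_inv]
  rw [hinv]
  have hdet : ∀ p, (f p).det ≠ 0 := fun p =>
    ((Matrix.isUnit_iff_isUnit_det (f p)).mp (hu p)).ne_zero
  exact contDiff_iff_contDiffAt.mpr fun p =>
    ContDiffAt.smul (((smDet hf).contDiffAt).inv (hdet p)) (smAdj hf).contDiffAt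

end

end PKPaux

namespace PKPaux
noncomputable section
variable {n : ℕ}

theorem xinv_pd (ψ X : E3 → Mat n) (hψ : Sm ψ) (hX : Sm X)
    (hψX : ∀ p, ψ p * X p = 1) (hXψ : ∀ p, X p * ψ p = 1) (v : E3) :
    pd v X = fun p => -(X p * (pd v ψ p * X p)) := by
  funext p
  have h1 : pd v (fun q => ψ q * X q) = fun p => pd v ψ p * X p + ψ p * pd v X p :=
    pd_mul v hψ hX
  have h2 : (fun q => ψ q * X q) = fun _ : E3 => (1 : Mat n) := funext hψX
  have h3 : pd v ψ p * X p + ψ p * pd v X p = 0 := by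
    rw [← congrFun h1 p, h2, pd_const]
  have h4 : ψ p * pd v X p = -(pd v ψ p * X p) := by
    rw [eq_neg_iff_add_eq_zero, add_comm]; exact h3
  calc pd v X p = (X p * ψ p) * pd v X p := by rw [hXψ p, one_mul]
    _ = X p * (ψ p * pd v X p) := by rw [mul_assoc]
    _ = -(X p * (pd v ψ p * X p)) := by rw [h4, mul_neg]

theorem stageA_y (φ ψ X w : E3 → Mat n) (hφ : Sm φ) (hψ : Sm ψ) (hX : Sm X)
    (hψX : ∀ p, ψ p * X p = 1) (hXψ : ∀ p, X p * ψ p = 1)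
    (hw : w = fun p => pd (1,0,0) ψ p * X p)
    (hlin1 : pd (0,1,0) ψ
      = fun p => pd (1,0,0) (pd (1,0,0) ψ) p + (2:ℝ) • (pd (1,0,0) φ p * ψ p)) :
    pd (0,1,0) w = fun p => pd (1,0,0) (pd (1,0,0) w) p
      + (2:ℝ) • (pd (1,0,0) w p * w p) + (2:ℝ) • pd (1,0,0) (pd (1,0,0) φ) p
      + (2:ℝ) • (pd (1,0,0) φ p * w p - w p * pd (1,0,0) φ p) := by
  subst hw
  have hXd := xinv_pd ψ X hψ hX hψX hXψ
  have hsw : pd (0,1,0) (pd (1,0,0) ψ) = pd (1,0,0) (pd (0,1,0) ψ) := pd_swap hψ _ _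
  funext p
  have u1 : ∀ M : Mat n, ψ p * (X p * M) = M := by
    intro M; rw [← mul_assoc, hψX p, one_mul]
  have u2 : ∀ M : Mat n, X p * (ψ p * M) = M := by
    intro M; rw [← mul_assoc, hXψ p, one_mul]
  simp (disch := fun_prop) only [pd_mul, pd_add, pd_smul, pd_neg, hsw, hXd, hlin1]
  try simp only [mul_add, add_mul, mul_sub, sub_mul, neg_mul, mul_neg, smul_mul_assoc,
    mul_smul_comm, mul_assoc, smul_add, smul_sub, smul_neg, smul_smul]
  try simp only [u1, u2, hψX p, hXψ p, mul_one, one_mul]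
  try module
end
end PKPaux

namespace PKPaux
noncomputable section
variable {n : ℕ}

theorem stageA_t (φ ψ X w r : E3 → Mat n) (hφ : Sm φ) (hψ : Sm ψ) (hX : Sm X)
    (hψX : ∀ p, ψ p * X p = 1) (hXψ : ∀ p, X p * ψ p = 1)
    (hw : w = fun p => pd (1,0,0) ψ p * X p)
    (hr : r = fun q => pd (1,0,0) (pd (1,0,0) w) q + (2:ℝ) • (pd (1,0,0) w q * w q)
       + w q * pd (1,0,0) w q + w q * (w q * w q) + (3:ℝ) • (pd (1,0,0) φ q * w q)
       + (3/2:ℝ) • (pd (0,1,0) φ q + pd (1,0,0) (pd (1,0,0) φ) q))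
    (hlin2 : pd (0,0,1) ψ = fun p => pd (1,0,0) (pd (1,0,0) (pd (1,0,0) ψ)) p
       + (3:ℝ) • (pd (1,0,0) φ p * pd (1,0,0) ψ p)
       + ((3/2:ℝ) • (pd (0,1,0) φ p + pd (1,0,0) (pd (1,0,0) φ) p)) * ψ p) :
    pd (0,0,1) w = fun p => pd (1,0,0) r p + (r p * w p - w p * r p) := by
  subst hw; subst hr
  have hXd := xinv_pd ψ X hψ hX hψX hXψ
  have hsw : pd (0,0,1) (pd (1,0,0) ψ) = pd (1,0,0) (pd (0,0,1) ψ) := pd_swap hψ _ _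
  funext p
  have u1 : ∀ M : Mat n, ψ p * (X p * M) = M := by
    intro M; rw [← mul_assoc, hψX p, one_mul]
  have u2 : ∀ M : Mat n, X p * (ψ p * M) = M := by
    intro M; rw [← mul_assoc, hXψ p, one_mul]
  simp (disch := fun_prop) only [pd_mul, pd_add, pd_sub, pd_smul, pd_neg, hsw, hXd, hlin2]
  try simp only [mul_add, add_mul, mul_sub, sub_mul, neg_mul, mul_neg, smul_mul_assoc,
    mul_smul_comm, mul_assoc, smul_add, smul_sub, smul_neg, smul_smul]
  try simp only [u1, u2, hψX p, hXψ p, mul_one, one_mul]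
  try module

set_option maxHeartbeats 1000000 in
theorem stageB (φ w r Φ : E3 → Mat n) (hφ : Sm φ) (hw : Sm w)
    (hr : r = fun q => pd (1,0,0) (pd (1,0,0) w) q + (2:ℝ) • (pd (1,0,0) w q * w q)
       + w q * pd (1,0,0) w q + w q * (w q * w q) + (3:ℝ) • (pd (1,0,0) φ q * w q)
       + (3/2:ℝ) • (pd (0,1,0) φ q + pd (1,0,0) (pd (1,0,0) φ) q))
    (hwy : pd (0,1,0) w = fun p => pd (1,0,0) (pd (1,0,0) w) p
       + (2:ℝ) • (pd (1,0,0) w p * w p) + (2:ℝ) • pd (1,0,0) (pd (1,0,0) φ) p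
       + (2:ℝ) • (pd (1,0,0) φ p * w p - w p * pd (1,0,0) φ p))
    (hwt : pd (0,0,1) w = fun p => pd (1,0,0) r p + (r p * w p - w p * r p))
    (hΦ : Φ = fun q => φ q + w q)
    (hpKP : ∀ p, pd (1,0,0) (fun q => (4 : ℝ) • pd (0,0,1) φ q
          - pd (1,0,0) (pd (1,0,0) (pd (1,0,0) φ)) q
          - (6 : ℝ) • (pd (1,0,0) φ q * pd (1,0,0) φ q)) p
        - (3 : ℝ) • pd (0,1,0) (pd (0,1,0) φ) p
        + (6 : ℝ) • (pd (1,0,0) φ p * pd (0,1,0) φ p - pd (0,1,0) φ p * pd (1,0,0) φ p) = 0) :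
    ∀ p, pd (1,0,0) (fun q => (4 : ℝ) • pd (0,0,1) Φ q
          - pd (1,0,0) (pd (1,0,0) (pd (1,0,0) Φ)) q
          - (6 : ℝ) • (pd (1,0,0) Φ q * pd (1,0,0) Φ q)) p
        - (3 : ℝ) • pd (0,1,0) (pd (0,1,0) Φ) p
        + (6 : ℝ) • (pd (1,0,0) Φ p * pd (0,1,0) Φ p - pd (0,1,0) Φ p * pd (1,0,0) Φ p) = 0 := by
  subst hΦ; subst hr
  intro p
  have key := hpKP p
  have s1 : pd (0,1,0) (pd (1,0,0) w) = pd (1,0,0) (pd (0,1,0) w) := pd_swap hw _ _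
  have s2 : pd (0,1,0) (pd (1,0,0) (pd (1,0,0) w))
      = pd (1,0,0) (pd (0,1,0) (pd (1,0,0) w)) := pd_swap (smPd _ hw) _ _
  have s3 : pd (0,1,0) (pd (1,0,0) φ) = pd (1,0,0) (pd (0,1,0) φ) := pd_swap hφ _ _
  have s4 : pd (0,1,0) (pd (1,0,0) (pd (1,0,0) φ))
      = pd (1,0,0) (pd (0,1,0) (pd (1,0,0) φ)) := pd_swap (smPd _ hφ) _ _
  simp (disch := fun_prop) only [pd_mul, pd_add, pd_sub, pd_smul, pd_neg,
    s2, s1, s4, s3, hwy, hwt] at key ⊢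
  refine Eq.trans ?_ key
  simp only [mul_add, add_mul, mul_sub, sub_mul, neg_mul, mul_neg, smul_mul_assoc,
    mul_smul_comm, mul_assoc, smul_add, smul_sub, smul_neg, smul_smul]
  module
end
end PKPaux

open PKPaux

/-- Darboux transformation of the noncommutative pKP equation: if `φ` solves
pKP and `ψ` solves the associated linear system, then `φ' = φ + ψ_x ψ⁻¹` also
solves pKP. -/
theorem pKP_darboux (n : ℕ)
    (φ ψ : ℝ × ℝ × ℝ → Matrix (Fin n) (Fin n) ℝ)
    (hφ : ContDiff ℝ (⊤ : ℕ∞) φ) (hψ : ContDiff ℝ (⊤ : ℕ∞) ψ)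
    (hψinv : ∀ p, IsUnit (ψ p))
    (hpKP : ∀ p, pdx (fun q => (4 : ℝ) • pdt φ q - pdx (pdx (pdx φ)) q
          - (6 : ℝ) • (pdx φ q * pdx φ q)) p
        - (3 : ℝ) • pdy (pdy φ) p
        + (6 : ℝ) • (pdx φ p * pdy φ p - pdy φ p * pdx φ p) = 0)
    (hlin1 : ∀ p, pdy ψ p = pdx (pdx ψ) p + 2 • (pdx φ p * ψ p))
    (hlin2 : ∀ p, pdt ψ p = pdx (pdx (pdx ψ)) p + 3 • (pdx φ p * pdx ψ p)
        + ((3 / 2 : ℝ) • (pdy φ p + pdx (pdx φ) p)) * ψ p)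
    (φ' : ℝ × ℝ × ℝ → Matrix (Fin n) (Fin n) ℝ)
    (hφ' : ∀ p, φ' p = φ p + pdx ψ p * (ψ p)⁻¹) :
    ∀ p, pdx (fun q => (4 : ℝ) • pdt φ' q - pdx (pdx (pdx φ')) q
          - (6 : ℝ) • (pdx φ' q * pdx φ' q)) p
        - (3 : ℝ) • pdy (pdy φ') p
        + (6 : ℝ) • (pdx φ' p * pdy φ' p - pdy φ' p * pdx φ' p) = 0 := by
  simp only [pdx_eq, pdy_eq, pdt_eq] at hpKP hlin1 hlin2 hφ' ⊢
  have hnat : ∀ (k : ℕ) (M : Matrix (Fin n) (Fin n) ℝ), k • M = (k : ℝ) • M := by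
    intro k M; rw [Nat.cast_smul_eq_nsmul ℝ]
  have hdet : ∀ p, IsUnit (ψ p).det := fun p => (Matrix.isUnit_iff_isUnit_det _).mp (hψinv p)
  have hψX : ∀ p, ψ p * (ψ p)⁻¹ = 1 := fun p => Matrix.mul_nonsing_inv _ (hdet p)
  have hXψ : ∀ p, (ψ p)⁻¹ * ψ p = 1 := fun p => Matrix.nonsing_inv_mul _ (hdet p)
  have hX : Sm (n := n) (fun p => (ψ p)⁻¹) := smInv hψ hψinv
  have hw : Sm (n := n) (fun p => pd (1,0,0) ψ p * (ψ p)⁻¹) := smMul (smPd _ hψ) hX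
  have hlin1' : pd (0,1,0) ψ = fun p => pd (1,0,0) (pd (1,0,0) ψ) p
      + (2:ℝ) • (pd (1,0,0) φ p * ψ p) := by
    funext p; rw [hlin1 p, hnat 2]; norm_num
  have hlin2' : pd (0,0,1) ψ = fun p => pd (1,0,0) (pd (1,0,0) (pd (1,0,0) ψ)) p
      + (3:ℝ) • (pd (1,0,0) φ p * pd (1,0,0) ψ p)
      + ((3/2:ℝ) • (pd (0,1,0) φ p + pd (1,0,0) (pd (1,0,0) φ) p)) * ψ p := by
    funext p; rw [hlin2 p, hnat 3]; norm_num
  have hwy := stageA_y φ ψ (fun p => (ψ p)⁻¹) (fun p => pd (1,0,0) ψ p * (ψ p)⁻¹)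
    hφ hψ hX hψX hXψ rfl hlin1'
  have hwt := stageA_t φ ψ (fun p => (ψ p)⁻¹) (fun p => pd (1,0,0) ψ p * (ψ p)⁻¹) _
    hφ hψ hX hψX hXψ rfl rfl hlin2'
  have hΦ : φ' = fun q => φ q + (fun p => pd (1,0,0) ψ p * (ψ p)⁻¹) q := funext fun p => hφ' p
  exact stageB φ (fun p => pd (1,0,0) ψ p * (ψ p)⁻¹) _ φ' hφ hw rfl hwy hwt hΦ hpKP
end
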